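/- arXiv:2112.03077 — 5 statements merged into one kernel-verified Lean document; each statement's English description precedes it below -/
import Mathlib

section
/- Let ℓ, m ≥ 2 be integers, and let a, b ≥ 1 be odd integers with s(a) = ℓ and s(b) = m. If s(ab) = 2, then ab < 2^(2ℓm − 4). -/
/-!
Write `a = 2^g x + 1`, `b = 2^h y + 1` with `x, y` odd and `ab = 2^n + 1`. Comparing 2-adic
valuations in `2^g x + 2^h y · a = 2^n` forces `g = h`, and then `2^g ∣ x + y`. As `x` is odd,
`(x - 1) + y ≡ -1 (mod 2^g)` has at least `g` binary ones, so subadditivity of `s` gives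
`g + 3 ≤ s a + s b`. On the other side `ab - (2^g + 1) = 2^n - 2^g` has `n - g` ones, while
writing it as `(a - 1 - 2^g) + a (b - 1)` and using subadditivity and submultiplicativity of `s`
bounds its number of ones by `s a · s b - 2`. Hence `n ≤ ℓm + ℓ + m - 5 ≤ 2ℓm - 5`.
-/

/-- `s n` is the number of nonzero digits (ones) in the binary expansion of `n`. -/
def s (n : ℕ) : ℕ := (Nat.digits 2 n).count 1

@[simp]
lemma s_zero : s 0 = 0 := by simp [s]

@[simp]
lemma s_two_mul (n : ℕ) : s (2 * n) = s n := by
  rcases eq_or_ne n 0 with rfl | hn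
  · rfl
  · simpa [s] using congrArg (List.count 1) (Nat.digits_add 2 one_lt_two 0 n two_pos (.inr hn))

@[simp]
lemma s_two_mul_add_one (n : ℕ) : s (2 * n + 1) = s n + 1 := by
  simpa [s, add_comm] using
    congrArg (List.count 1) (Nat.digits_add 2 one_lt_two 1 n one_lt_two (.inl one_ne_zero))

@[simp]
lemma s_one : s 1 = 1 := by simpa using s_two_mul_add_one 0

@[simp]
lemma s_two_pow_mul (k n : ℕ) : s (2 ^ k * n) = s n := by
  induction k with
  | zero => simp
  | succ k ih => rw [pow_succ', mul_assoc, s_two_mul, ih]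

lemma s_two_pow_mul_add_one {g : ℕ} (hg : 0 < g) (x : ℕ) : s (2 ^ g * x + 1) = s x + 1 := by
  obtain ⟨g, rfl⟩ := Nat.exists_eq_add_of_lt hg
  rw [zero_add, pow_succ', mul_assoc, s_two_mul_add_one, s_two_pow_mul]

lemma s_succ_le (n : ℕ) : s (n + 1) ≤ s n + 1 := by
  induction n using Nat.evenOddRec with
  | h0 => simp
  | h_even n _ => simp
  | h_odd n ih =>
    rw [show 2 * n + 1 + 1 = 2 * (n + 1) by ring, s_two_mul, s_two_mul_add_one]
    omega

lemma s_add_le (x y : ℕ) : s (x + y) ≤ s x + s y := by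
  induction x using Nat.evenOddRec generalizing y with
  | h0 => simp
  | h_even x ih =>
    obtain ⟨y, rfl | rfl⟩ := Nat.even_or_odd' y
    · rw [← mul_add, s_two_mul, s_two_mul, s_two_mul]; exact ih y
    · rw [← add_assoc, ← mul_add, s_two_mul_add_one, s_two_mul, s_two_mul_add_one]
      exact Nat.add_le_add_right (ih y) 1
  | h_odd x ih =>
    obtain ⟨y, rfl | rfl⟩ := Nat.even_or_odd' y
    · rw [add_right_comm, ← mul_add, s_two_mul_add_one, s_two_mul, s_two_mul_add_one]
      linarith [ih y]
    · rw [show 2 * x + 1 + (2 * y + 1) = 2 * (x + (y + 1)) by ring, s_two_mul,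
        s_two_mul_add_one, s_two_mul_add_one]
      linarith [ih (y + 1), s_succ_le y]

lemma s_mul_le (x y : ℕ) : s (x * y) ≤ s x * s y := by
  induction y using Nat.evenOddRec with
  | h0 => simp
  | h_even y ih => rwa [mul_left_comm, s_two_mul, s_two_mul]
  | h_odd y ih =>
    rw [mul_add_one, mul_left_comm, s_two_mul_add_one, mul_add_one]
    exact (s_add_le _ _).trans (by rw [s_two_mul]; omega)

lemma le_s_of_two_pow_dvd_succ {k n : ℕ} (h : 2 ^ k ∣ n + 1) : k ≤ s n := by
  induction k generalizing n with
  | zero => exact Nat.zero_le _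
  | succ k ih =>
    obtain ⟨n, rfl | rfl⟩ := Nat.even_or_odd' n
    · exact absurd ((Nat.pow_dvd_pow 2 k.succ_pos).trans h) (by rw [pow_one]; omega)
    · rw [show 2 * n + 1 + 1 = 2 * (n + 1) by ring, pow_succ',
        Nat.mul_dvd_mul_iff_left two_pos] at h
      exact (s_two_mul_add_one n).symm ▸ Nat.succ_le_succ (ih h)

lemma sub_le_s_two_pow_sub_two_pow (n g : ℕ) : n - g ≤ s (2 ^ n - 2 ^ g) := by
  rcases le_total g n with hgn | hng
  · obtain ⟨k, rfl⟩ := Nat.exists_eq_add_of_le hgn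
    rw [add_tsub_cancel_left, pow_add, ← Nat.mul_sub_one, s_two_pow_mul]
    exact le_s_of_two_pow_dvd_succ (by rw [Nat.sub_add_cancel Nat.one_le_two_pow])
  · simp [Nat.sub_eq_zero_of_le hng]

lemma succ_le_s_add_s_of_two_pow_dvd_add {g x y : ℕ} (hx : Odd x) (h : 2 ^ g ∣ x + y) :
    g + 1 ≤ s x + s y := by
  obtain ⟨x, rfl⟩ := hx
  have hg : g ≤ s (2 * x + y) := le_s_of_two_pow_dvd_succ (by rwa [add_right_comm])
  have := s_add_le (2 * x) y
  rw [s_two_mul] at this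
  rw [s_two_mul_add_one]
  omega

lemma s_ne_zero {n : ℕ} (hn : n ≠ 0) : s n ≠ 0 := by
  obtain ⟨k, _, ⟨x, rfl⟩, rfl⟩ := Nat.exists_eq_two_pow_mul_odd hn
  simp

lemma exists_eq_two_pow_of_s_eq_one {n : ℕ} (h : s n = 1) : ∃ k, n = 2 ^ k := by
  obtain ⟨k, _, ⟨x, rfl⟩, rfl⟩ :=
    Nat.exists_eq_two_pow_mul_odd (n := n) (by rintro rfl; simp at h)
  obtain rfl : x = 0 := by_contra fun hx ↦ s_ne_zero hx (by simpa using h)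
  exact ⟨k, by simp⟩

lemma exists_eq_two_pow_add_one_of_s_eq_two {N : ℕ} (hN : Odd N) (h : s N = 2) :
    ∃ n, 0 < n ∧ N = 2 ^ n + 1 := by
  obtain ⟨k, rfl⟩ := hN
  obtain ⟨n, rfl⟩ := exists_eq_two_pow_of_s_eq_one (by simpa using h)
  exact ⟨n + 1, n.succ_pos, by ring⟩

lemma exists_eq_two_pow_mul_add_one {a : ℕ} (ha : Odd a) (ha1 : a ≠ 1) :
    ∃ g x, 0 < g ∧ Odd x ∧ a = 2 ^ g * x + 1 := by
  obtain ⟨k, rfl⟩ := ha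
  obtain ⟨i, x, hx, rfl⟩ := Nat.exists_eq_two_pow_mul_odd (n := k) (by omega)
  exact ⟨i + 1, x, i.succ_pos, hx, by ring⟩

lemma le_of_two_pow_mul_add_one_mul_eq {i j x y n : ℕ} (hx : Odd x) (hy : 0 < y)
    (h : (2 ^ i * x + 1) * (2 ^ j * y + 1) = 2 ^ n + 1) : j ≤ i := by
  by_contra! hij
  have hsum : 2 ^ i * x + 2 ^ j * y * (2 ^ i * x + 1) = 2 ^ n := by linarith
  have hin : i + 1 ≤ n := by
    have : 2 ^ i < 2 ^ n := by
      have : 2 ^ i ≤ 2 ^ i * x := Nat.le_mul_of_pos_right _ hx.pos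
      have : 0 < 2 ^ j * y * (2 ^ i * x + 1) := by positivity
      omega
    exact (Nat.pow_lt_pow_iff_right one_lt_two).mp this
  have hdvd : 2 ^ (i + 1) ∣ 2 ^ i * x := by
    have := Nat.pow_dvd_pow 2 hin
    rw [← hsum] at this
    exact (Nat.dvd_add_left (((Nat.pow_dvd_pow 2 hij).mul_right y).mul_right _)).mp this
  rw [pow_succ, Nat.mul_dvd_mul_iff_left (by positivity)] at hdvd
  exact Nat.not_even_iff_odd.mpr hx (even_iff_two_dvd.mpr hdvd)

lemma two_pow_dvd_add_of_mul_eq {g x y n : ℕ} (hx : 0 < x) (hy : 0 < y)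
    (h : (2 ^ g * x + 1) * (2 ^ g * y + 1) = 2 ^ n + 1) : 2 ^ g ∣ x + y := by
  have hsum : 2 ^ g * (x + y) + 2 ^ g * 2 ^ g * (x * y) = 2 ^ n := by linarith
  have hn : 2 * g ≤ n := by
    have : 2 ^ (2 * g) ≤ 2 ^ n := by
      have : 2 ^ g * 2 ^ g ≤ 2 ^ g * 2 ^ g * (x * y) := Nat.le_mul_of_pos_right _ (by positivity)
      rw [two_mul, pow_add]
      omega
    exact (Nat.pow_le_pow_iff_right one_lt_two).mp this
  have hdvd : 2 ^ g * 2 ^ g ∣ 2 ^ g * (x + y) := by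
    have : 2 ^ g * 2 ^ g ∣ 2 ^ n := by rw [← pow_add, ← two_mul]; exact Nat.pow_dvd_pow 2 hn
    rw [← hsum] at this
    exact (Nat.dvd_add_left (dvd_mul_right _ _)).mp this
  exact (Nat.mul_dvd_mul_iff_left (by positivity)).mp hdvd

lemma s_mul_sub_le {g x b : ℕ} (hg : 0 < g) (hx : Odd x) (hb : Odd b) :
    s ((2 ^ g * x + 1) * b - (2 ^ g + 1)) + 2 ≤ s (2 ^ g * x + 1) * s b := by
  obtain ⟨x, rfl⟩ := hx
  obtain ⟨b, rfl⟩ := hb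
  set a := 2 ^ g * (2 * x + 1) + 1
  have hsa : s a = s x + 2 := by simp [a, s_two_pow_mul_add_one hg]
  have hsplit : a * (2 * b + 1) - (2 ^ g + 1) = 2 ^ (g + 1) * x + 2 * (a * b) := by
    simp only [a]; rw [pow_succ]; ring_nf; omega
  rw [hsplit, s_two_mul_add_one, hsa]
  have := s_add_le (2 ^ (g + 1) * x) (2 * (a * b))
  rw [s_two_pow_mul, s_two_mul] at this
  have := s_mul_le a b
  rw [hsa] at this
  nlinarith

theorem products_few_digits_k2_general (ℓ m : ℕ) (hℓ : 2 ≤ ℓ) (hm : 2 ≤ m)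
    (a b : ℕ) (hoa : Odd a) (hob : Odd b)
    (hsa : s a = ℓ) (hsb : s b = m) (hsab : s (a * b) = 2) :
    a * b < 2 ^ (2 * ℓ * m - 4) := by
  obtain ⟨n, hn0, hn⟩ := exists_eq_two_pow_add_one_of_s_eq_two (hoa.mul hob) hsab
  obtain ⟨g, x, hg, hx, rfl⟩ :=
    exists_eq_two_pow_mul_add_one hoa (by rintro rfl; simp at hsa; omega)
  obtain ⟨j, y, -, hy, rfl⟩ :=
    exists_eq_two_pow_mul_add_one hob (by rintro rfl; simp at hsb; omega)
  obtain rfl : g = j := le_antisymm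
    (le_of_two_pow_mul_add_one_mul_eq hy hx.pos (by rwa [mul_comm]))
    (le_of_two_pow_mul_add_one_mul_eq hx hy.pos hn)
  have hwindow : g + 3 ≤ ℓ + m := by
    have := succ_le_s_add_s_of_two_pow_dvd_add hx (two_pow_dvd_add_of_mul_eq hx.pos hy.pos hn)
    rw [s_two_pow_mul_add_one hg] at hsa hsb
    omega
  have hgrid : n - g + 2 ≤ ℓ * m := by
    have := s_mul_sub_le hg hx hob
    rw [hn, Nat.add_sub_add_right, hsa, hsb] at this
    have := sub_le_s_two_pow_sub_two_pow n g
    omega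
  have : ℓ + m ≤ ℓ * m := by nlinarith
  calc _ = 2 ^ n + 1 := hn
    _ < 2 ^ (n + 1) := by rw [pow_succ]; have := Nat.one_lt_two_pow hn0.ne'; omega
    _ ≤ 2 ^ (2 * ℓ * m - 4) := Nat.pow_le_pow_right two_pos (by rw [mul_assoc]; omega)

theorem products_few_digits_k2 (ℓ m : ℕ) (hℓ : 2 ≤ ℓ) (hm : 2 ≤ m)
    (a b : ℕ) (ha : 1 ≤ a) (hb : 1 ≤ b) (hoa : Odd a) (hob : Odd b)
    (hsa : s a = ℓ) (hsb : s b = m) (hsab : s (a * b) = 2) :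
    a * b < 2 ^ (2 * ℓ * m - 4) :=
  products_few_digits_k2_general ℓ m hℓ hm a b hoa hob hsa hsb hsab
end

section
/- For every integer L ≥ 1 there exist integers ℓ, m ≥ L such that there are infinitely many pairs (a, b) of positive odd integers with s(a) = ℓ, s(b) = m, and s(ab) = 4. -/
/-!
Put `N = 2 ^ L`. The number `a = N² - N + 1` has `L + 1` binary digits and divides both
`N³ + 1 = a u` and `N⁹ + 1 = a v`, where `u = N + 1` and `v = (N + 1)(N⁶ - N³ + 1)`.
For every large `T` the number `b = u + 2 ^ T v` is odd with `s b = s u + s v`, and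
`a b = (N³ + 1) + 2 ^ T (N⁹ + 1)` has exactly four binary digits because the two summands do not
overlap.
-/

lemma s_add_two_pow_mul {x K : ℕ} (hx : x < 2 ^ K) (y : ℕ) :
    s (x + 2 ^ K * y) = s x + s y := by
  rcases y.eq_zero_or_pos with rfl | hy
  · simp [s]
  obtain ⟨k, hK⟩ := Nat.exists_eq_add_of_le ((Nat.digits_length_le_iff one_lt_two x).2 hx)
  rw [s, hK, ← Nat.digits_append_zeroes_append_digits one_lt_two hy]
  simp [s, List.count_replicate]

lemma s_add_two_pow {x K : ℕ} (hx : x < 2 ^ K) : s (x + 2 ^ K) = s x + 1 := by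
  simpa [s] using s_add_two_pow_mul hx 1

lemma s_one_add_two_pow {K : ℕ} (hK : 0 < K) : s (1 + 2 ^ K) = 2 := by
  simpa [s] using s_add_two_pow (Nat.one_lt_two_pow hK.ne')

lemma s_two_pow_sub_one (K : ℕ) : s (2 ^ K - 1) = K := by
  induction K with
  | zero => simp [s]
  | succ K ih =>
    have h : 2 ^ (K + 1) - 1 = 1 + 2 ^ 1 * (2 ^ K - 1) := by
      have := Nat.one_le_two_pow (n := K); rw [pow_succ]; omega
    rw [h, s_add_two_pow_mul one_lt_two, ih]
    simp [s, add_comm]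

lemma s_two_pow_sub_one_sub_two_pow {j K : ℕ} (hj : j < K) : s (2 ^ K - 1 - 2 ^ j) = K - 1 := by
  obtain ⟨i, rfl⟩ := Nat.exists_eq_add_of_lt hj
  have h : 2 ^ (j + i + 1) - 1 - 2 ^ j = (2 ^ j - 1) + 2 ^ (j + 1) * (2 ^ i - 1) := by
    obtain ⟨u, hu⟩ := Nat.exists_eq_add_of_le' (Nat.one_le_two_pow (n := j))
    obtain ⟨v, hv⟩ := Nat.exists_eq_add_of_le' (Nat.one_le_two_pow (n := i))
    rw [pow_succ, pow_succ, pow_add, hu, hv, Nat.add_sub_cancel, Nat.add_sub_cancel]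
    refine Nat.sub_eq_of_eq_add (Nat.sub_eq_of_eq_add ?_)
    ring
  rw [h, s_add_two_pow_mul ((Nat.sub_le _ _).trans_lt (Nat.pow_lt_pow_succ one_lt_two)),
    s_two_pow_sub_one, s_two_pow_sub_one]
  omega

lemma infinite_setOf_odd_pairs_s_mul_eq {a c d : ℕ} (ha : Odd a) (hd : Odd d) (hc : 0 < c) :
    {p : ℕ × ℕ | 0 < p.1 ∧ 0 < p.2 ∧ Odd p.1 ∧ Odd p.2 ∧
      s p.1 = s a ∧ s p.2 = s d + s c ∧ s (p.1 * p.2) = s (a * d) + s (a * c)}.Infinite := by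
  have had_lt (t : ℕ) : a * d < 2 ^ (t + a * d + 1) :=
    Nat.lt_two_pow_self.trans_le (Nat.pow_le_pow_right two_pos (by omega))
  have hd_lt (t : ℕ) : d < 2 ^ (t + a * d + 1) :=
    (Nat.le_mul_of_pos_left d ha.pos).trans_lt (had_lt t)
  refine Set.infinite_of_injective_forall_mem
    (f := fun t => (a, d + 2 ^ (t + a * d + 1) * c)) (fun t₁ t₂ h => ?_) (fun t => ?_)
  · have := Nat.pow_right_injective le_rfl
      (Nat.eq_of_mul_eq_mul_right hc (Nat.add_left_cancel (Prod.ext_iff.1 h).2))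
    omega
  have hb : Odd (d + 2 ^ (t + a * d + 1) * c) :=
    hd.add_even ((Nat.even_pow.2 ⟨even_two, by omega⟩).mul_right c)
  refine ⟨ha.pos, hb.pos, ha, hb, rfl, s_add_two_pow_mul (hd_lt t) c, ?_⟩
  rw [mul_add, mul_left_comm]
  exact s_add_two_pow_mul (had_lt t) (a * c)

namespace FourDigits

def a (L : ℕ) : ℕ := 1 + 2 ^ L * (2 ^ L - 1)

def u (L : ℕ) : ℕ := 1 + 2 ^ L

/-- `(N + 1)(N⁶ - N³ + 1) = (N + 1) + N³ ((N³ - 1 - N) + N⁴)` for `N = 2 ^ L`, written as a sum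
of non-overlapping binary blocks. -/
def v (L : ℕ) : ℕ := u L + 2 ^ (3 * L) * (2 ^ (3 * L) - 1 - 2 ^ L + 2 ^ (4 * L))

variable {L : ℕ}

lemma a_mul_u (L : ℕ) : a L * u L = 1 + 2 ^ (3 * L) := by
  have h := Nat.one_le_two_pow (n := L)
  rw [a, u, mul_comm 3, pow_mul]
  zify [h]
  ring

lemma u_lt (hL : 0 < L) : u L < 2 ^ (3 * L) :=
  calc u L ≤ 2 ^ (L + 1) := by rw [u, pow_succ]; have := Nat.one_le_two_pow (n := L); omega
    _ < 2 ^ (3 * L) := Nat.pow_lt_pow_right one_lt_two (by omega)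

lemma a_mul_v (hL : 0 < L) : a L * v L = 1 + 2 ^ (9 * L) := by
  have h1 : 1 ≤ 2 ^ L := Nat.one_le_two_pow
  have h2 := u_lt hL
  rw [u, mul_comm, pow_mul] at h2
  rw [a, v, u, mul_comm 3, mul_comm 4, mul_comm 9, pow_mul, pow_mul, pow_mul]
  generalize 2 ^ L = N at h1 h2 ⊢
  zify [h1, (by omega : 1 ≤ N ^ 3), (by omega : N ≤ N ^ 3 - 1)]
  ring

lemma s_a (hL : 0 < L) : s (a L) = L + 1 := by
  rw [a, s_add_two_pow_mul (Nat.one_lt_two_pow hL.ne'), s_two_pow_sub_one]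
  simp [s, add_comm]

lemma s_u (hL : 0 < L) : s (u L) = 2 := s_one_add_two_pow hL

lemma s_v (hL : 0 < L) : s (v L) = 3 * L + 2 := by
  have h1 : 2 ^ (3 * L) - 1 - 2 ^ L < 2 ^ (4 * L) :=
    (tsub_le_self.trans tsub_le_self).trans_lt (Nat.pow_lt_pow_right one_lt_two (by omega))
  rw [v, s_add_two_pow_mul (u_lt hL), s_u hL, s_add_two_pow h1,
    s_two_pow_sub_one_sub_two_pow (by omega)]
  omega

lemma odd_a (hL : 0 < L) : Odd (a L) :=
  ((Nat.even_pow.2 ⟨even_two, hL.ne'⟩).mul_right _).one_add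

lemma odd_u (hL : 0 < L) : Odd (u L) :=
  (Nat.even_pow.2 ⟨even_two, hL.ne'⟩).one_add

lemma v_pos (L : ℕ) : 0 < v L := by
  unfold v u; positivity

end FourDigits

theorem products_few_digits_k4_infinite (L : ℕ) (hL : 1 ≤ L) :
    ∃ ℓ m : ℕ, L ≤ ℓ ∧ L ≤ m ∧
      {p : ℕ × ℕ | 0 < p.1 ∧ 0 < p.2 ∧ Odd p.1 ∧ Odd p.2 ∧
        s p.1 = ℓ ∧ s p.2 = m ∧ s (p.1 * p.2) = 4}.Infinite := by
  open FourDigits in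
  refine ⟨s (a L), s (u L) + s (v L), by rw [s_a hL]; omega, by rw [s_u hL, s_v hL]; omega, ?_⟩
  simpa only [a_mul_u, a_mul_v hL, s_one_add_two_pow (Nat.mul_pos three_pos hL),
    s_one_add_two_pow (Nat.mul_pos (by norm_num : 0 < 9) hL)] using
    infinite_setOf_odd_pairs_s_mul_eq (odd_a hL) (odd_u hL) (v_pos L)
end

section
/- Let Λ be a nonempty finite set, let c_n be a nonnegative integer for each n ∈ Λ, and suppose s(∑_{n∈Λ} 2^(c_n)) = t. Then there exists a partition of Λ into t pairwise disjoint nonempty subsets Ξ_1, …, Ξ_t such that for each k with 1 ≤ k ≤ t, the subsum ∑_{n∈Ξ_k} 2^(c_n) is a power of 2; moreover these t powers of 2 are exactly the t distinct powers of 2 occurring in the binary expansion of ∑_{n∈Λ} 2^(c_n). -/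
theorem s_eq_length_bitIndices (n : ℕ) : s n = n.bitIndices.length := by
  induction n using Nat.binaryRec with
  | zero => simp [s]
  | bit b n ih =>
    rcases eq_or_ne (Nat.bit b n) 0 with h | h
    · simp [h, s]
    rw [s, Nat.digits_two_eq_bits] at ih ⊢
    rw [Nat.bits_append_bit _ _ fun hn => by cases b <;> simp_all]
    cases b <;> simp [ih]

theorem s_sum_two_pow (E : Finset ℕ) : s (∑ i ∈ E, 2 ^ i) = E.card := by
  rw [s_eq_length_bitIndices, ← List.toFinset_card_of_nodup Nat.bitIndices_nodup,
    Finset.toFinset_bitIndices_sum_two_pow]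

theorem testBit_sum_two_pow (E : Finset ℕ) (j : ℕ) :
    (∑ i ∈ E, 2 ^ i).testBit j ↔ j ∈ E := by
  rw [← Nat.mem_bitIndices, ← List.mem_toFinset, Finset.toFinset_bitIndices_sum_two_pow]

namespace Finset

variable {α : Type*} [DecidableEq α]

def mergeBlocks (S : Finset (Finset α)) (B₁ B₂ : Finset α) : Finset (Finset α) :=
  insert (B₁ ∪ B₂) ((S.erase B₁).erase B₂)

variable {S : Finset (Finset α)} {B₁ B₂ : Finset α}

theorem card_mergeBlocks_lt (h₁ : B₁ ∈ S) (h₂ : B₂ ∈ S) (hne : B₁ ≠ B₂) :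
    (S.mergeBlocks B₁ B₂).card < S.card := by
  have h₂' : B₂ ∈ S.erase B₁ := mem_erase.2 ⟨hne.symm, h₂⟩
  calc (S.mergeBlocks B₁ B₂).card ≤ ((S.erase B₁).erase B₂).card + 1 := card_insert_le _ _
    _ < S.card := by
      rw [card_erase_of_mem h₂', card_erase_of_mem h₁]
      have := one_lt_card.2 ⟨B₁, h₁, B₂, h₂, hne⟩
      omega

theorem biUnion_mergeBlocks (h₁ : B₁ ∈ S) (h₂ : B₂ ∈ S) (hne : B₁ ≠ B₂) :
    (S.mergeBlocks B₁ B₂).biUnion id = S.biUnion id := by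
  have h₂' : B₂ ∈ S.erase B₁ := mem_erase.2 ⟨hne.symm, h₂⟩
  conv_rhs => rw [← insert_erase h₁, ← insert_erase h₂']
  simp only [mergeBlocks, biUnion_insert, id, union_assoc]

theorem pairwiseDisjoint_mergeBlocks (hS : (S : Set (Finset α)).PairwiseDisjoint id)
    (h₁ : B₁ ∈ S) (h₂ : B₂ ∈ S) :
    (S.mergeBlocks B₁ B₂ : Set (Finset α)).PairwiseDisjoint id := by
  rw [mergeBlocks, coe_insert]
  refine (hS.subset ?_).insert fun C hC hne => ?_
  · simp only [coe_erase]
    exact Set.sdiff_subset.trans Set.sdiff_subset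
  · simp only [coe_erase, Set.mem_sdiff, Set.mem_singleton_iff, mem_coe] at hC
    obtain ⟨⟨hC, hC₁⟩, hC₂⟩ := hC
    exact disjoint_union_left.2 ⟨hS h₁ hC (Ne.symm hC₁), hS h₂ hC (Ne.symm hC₂)⟩

theorem exists_coarsening_injOn_sum {M : Type*} [Semiring M] (f : α → M)
    (S : Finset (Finset α)) (hS : (S : Set (Finset α)).PairwiseDisjoint id)
    (hpow : ∀ B ∈ S, ∃ j, ∑ n ∈ B, f n = 2 ^ j) :
    ∃ T : Finset (Finset α), (T : Set (Finset α)).PairwiseDisjoint id ∧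
      T.biUnion id = S.biUnion id ∧ (∀ B ∈ T, ∃ j, ∑ n ∈ B, f n = 2 ^ j) ∧
      Set.InjOn (fun B => ∑ n ∈ B, f n) T := by
  by_cases hinj : Set.InjOn (fun B => ∑ n ∈ B, f n) S
  · exact ⟨S, hS, rfl, hpow, hinj⟩
  obtain ⟨B₁, h₁, B₂, h₂, hsum, hne⟩ :
      ∃ B₁ ∈ S, ∃ B₂ ∈ S, ∑ n ∈ B₁, f n = ∑ n ∈ B₂, f n ∧ B₁ ≠ B₂ := by
    simpa [Set.InjOn] using hinj
  have hpow' : ∀ B ∈ S.mergeBlocks B₁ B₂, ∃ j, ∑ n ∈ B, f n = 2 ^ j := by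
    simp only [mergeBlocks, mem_insert, forall_eq_or_imp]
    refine ⟨?_, fun B hB => hpow B (mem_of_mem_erase (mem_of_mem_erase hB))⟩
    obtain ⟨j, hj⟩ := hpow B₁ h₁
    have hdisj : Disjoint B₁ B₂ := hS h₁ h₂ hne
    exact ⟨j + 1, by rw [sum_union hdisj, ← hsum, hj, pow_succ, mul_two]⟩
  obtain ⟨T, hT, hcover, hTpow, hTinj⟩ :=
    exists_coarsening_injOn_sum f _ (pairwiseDisjoint_mergeBlocks hS h₁ h₂) hpow'
  exact ⟨T, hT, hcover.trans (biUnion_mergeBlocks h₁ h₂ hne), hTpow, hTinj⟩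
termination_by S.card
decreasing_by exact card_mergeBlocks_lt h₁ h₂ hne

theorem exists_partition_injOn_sum_eq_two_pow {M : Type*} [Semiring M] (f : α → M)
    (Λ : Finset α) (hf : ∀ n ∈ Λ, ∃ j, f n = 2 ^ j) :
    ∃ T : Finset (Finset α), (T : Set (Finset α)).PairwiseDisjoint id ∧
      T.biUnion id = Λ ∧ (∀ B ∈ T, ∃ j, ∑ n ∈ B, f n = 2 ^ j) ∧
      Set.InjOn (fun B => ∑ n ∈ B, f n) T := by
  have hdisj : (singleton '' (Λ : Set α) : Set (Finset α)).PairwiseDisjoint id := by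
    rintro _ ⟨a, -, rfl⟩ _ ⟨b, -, rfl⟩ hne
    simpa [Function.onFun] using hne
  have hpow : ∀ B ∈ Λ.image singleton, ∃ j, ∑ n ∈ B, f n = 2 ^ j := by
    simpa using hf
  simpa only [image_biUnion, id_eq, biUnion_singleton_eq_self] using
    exists_coarsening_injOn_sum f _ (by rwa [coe_image]) hpow

end Finset

open Finset in
theorem partition_into_power_subsums_general {α : Type*} [DecidableEq α]
    (Λ : Finset α) (c : α → ℕ) (t : ℕ)
    (ht : s (∑ n ∈ Λ, 2 ^ c n) = t) :
    ∃ (Ξ : Fin t → Finset α) (e : Fin t → ℕ),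
      (∀ k, (Ξ k).Nonempty) ∧
      (∀ k, Ξ k ⊆ Λ) ∧
      (∀ k k', k ≠ k' → Disjoint (Ξ k) (Ξ k')) ∧
      (Finset.univ.biUnion Ξ = Λ) ∧
      (∀ k, ∑ n ∈ Ξ k, 2 ^ c n = 2 ^ e k) ∧
      Function.Injective e ∧
      (∀ k, (∑ n ∈ Λ, 2 ^ c n).testBit (e k) = true) := by
  obtain ⟨T, hT, hcover, hpow, hinj⟩ :=
    exists_partition_injOn_sum_eq_two_pow (fun n => 2 ^ c n) Λ fun n _ => ⟨c n, rfl⟩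
  choose! e he using hpow
  have he_inj : Set.InjOn e T := fun B hB B' hB' h =>
    hinj hB hB' (by simp only [he B hB, he B' hB', h])
  have hsum : ∑ n ∈ Λ, 2 ^ c n = ∑ j ∈ T.image e, 2 ^ j := by
    rw [sum_image he_inj, ← hcover, sum_biUnion hT]
    exact sum_congr rfl he
  have hcard : T.card = t := by rw [← ht, hsum, s_sum_two_pow, card_image_of_injOn he_inj]
  set σ := (T.equivFinOfCardEq hcard).symm
  refine ⟨fun k => σ k, fun k => e (σ k), fun k => ?_, fun k => ?_, fun k k' hkk' => ?_, ?_,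
    fun k => he _ (σ k).2, ?_, fun k => ?_⟩
  · exact nonempty_of_sum_ne_zero ((he _ (σ k).2).trans_ne (pow_ne_zero _ two_ne_zero))
  · exact hcover ▸ subset_biUnion_of_mem id (σ k).2
  · exact hT (σ k).2 (σ k').2 (fun h => hkk' (σ.injective (Subtype.ext h)))
  · ext a
    simp only [mem_biUnion, mem_univ, true_and, ← hcover, id_eq]
    rw [← σ.surjective.exists (p := fun B : T => a ∈ (B : Finset α)), Subtype.exists]
    simp only [exists_prop]
  · exact fun k k' h => σ.injective (Subtype.ext (he_inj (σ k).2 (σ k').2 h))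
  · rw [hsum, testBit_sum_two_pow]
    exact mem_image_of_mem e (σ k).2

theorem partition_into_power_subsums {α : Type*} [DecidableEq α]
    (Λ : Finset α) (hΛ : Λ.Nonempty) (c : α → ℕ) (t : ℕ)
    (ht : s (∑ n ∈ Λ, 2 ^ c n) = t) :
    ∃ (Ξ : Fin t → Finset α) (e : Fin t → ℕ),
      (∀ k, (Ξ k).Nonempty) ∧
      (∀ k, Ξ k ⊆ Λ) ∧
      (∀ k k', k ≠ k' → Disjoint (Ξ k) (Ξ k')) ∧
      (Finset.univ.biUnion Ξ = Λ) ∧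
      (∀ k, ∑ n ∈ Ξ k, 2 ^ c n = 2 ^ e k) ∧
      Function.Injective e ∧
      (∀ k, (∑ n ∈ Λ, 2 ^ c n).testBit (e k) = true) :=
  partition_into_power_subsums_general Λ c t ht
end

section
/- For every positive integer n, s(2^(7n) + 2^(6n) − 2^(4n) − 2^(3n) + 2^n + 1) = 3n + 2. -/
theorem s_sum_map_two_pow {L : List ℕ} (hL : L.SortedLT) :
    s (L.map (2 ^ ·)).sum = L.length := by
  rw [s_eq_length_bitIndices, Nat.bitIndices_sum_map_two_pow hL]

theorem sum_map_two_pow_range'_add_two_pow (a k : ℕ) :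
    ((List.range' a k).map (2 ^ ·)).sum + 2 ^ a = 2 ^ (a + k) := by
  induction k with
  | zero => simp
  | succ k ih =>
    rw [List.range'_concat, List.map_append, List.sum_append, add_right_comm, ih]
    simp only [List.map_cons, List.map_nil, List.sum_singleton]
    ring

theorem s_b0 (n : ℕ) (hn : 1 ≤ n) :
    s (2 ^ (7 * n) + 2 ^ (6 * n) - 2 ^ (4 * n) - 2 ^ (3 * n) + 2 ^ n + 1) = 3 * n + 2 := by
  set L := [0, n] ++ List.range' (3 * n) n ++ List.range' (4 * n + 1) (2 * n - 1) ++ [7 * n]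
  have hL : L.SortedLT := by
    simp only [L, List.sortedLT_iff_pairwise, List.pairwise_append, List.pairwise_lt_range' 1 one_pos,
      List.pairwise_pair, List.pairwise_singleton, List.mem_append, List.mem_range'_1, List.mem_cons,
      List.not_mem_nil]
    grind
  have hsum : (L.map (2 ^ ·)).sum =
      2 ^ (7 * n) + 2 ^ (6 * n) - 2 ^ (4 * n) - 2 ^ (3 * n) + 2 ^ n + 1 := by
    have hlow := sum_map_two_pow_range'_add_two_pow (3 * n) n
    have hhigh := sum_map_two_pow_range'_add_two_pow (4 * n + 1) (2 * n - 1)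
    rw [show 3 * n + n = 4 * n by ring] at hlow
    rw [show 4 * n + 1 + (2 * n - 1) = 6 * n by omega, pow_succ] at hhigh
    simp only [L, List.map_append, List.map_cons, List.map_nil, List.sum_append, List.sum_cons,
      List.sum_nil, pow_zero]
    lia
  rw [← hsum, s_sum_map_two_pow hL]
  simp only [L, List.length_append, List.length_cons, List.length_range', List.length_nil]
  omega
end

section
/- Let a, b > 1 be odd integers with s(ab) = 2. Then the 2-adic valuation of a − 1 equals the 2-adic valuation of b − 1 (equivalently, the position of the lowest nonzero binary digit of a above the units digit coincides with that of b). -/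
lemma s_eq_zero {n : ℕ} (h : s n = 0) : n = 0 := by
  by_contra hn
  have hne : Nat.digits 2 n ≠ [] := Nat.digits_ne_nil_iff_ne_zero.mpr hn
  have hlast := Nat.getLast_digit_ne_zero 2 hn
  have hmem : (Nat.digits 2 n).getLast hne ∈ Nat.digits 2 n := List.getLast_mem hne
  have hlt : (Nat.digits 2 n).getLast hne < 2 := Nat.digits_lt_base (by norm_num) hmem
  have h1 : (Nat.digits 2 n).getLast hne = 1 := by omega
  exact List.count_eq_zero.mp h (h1 ▸ hmem)

lemma s_pow2 : ∀ n : ℕ, s n = 1 → ∃ j, n = 2 ^ j := by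
  intro n
  induction n using Nat.strong_induction_on with
  | _ n ih =>
    intro h
    have hn : n ≠ 0 := by rintro rfl; simp [s] at h
    have hd : Nat.digits 2 n = n % 2 :: Nat.digits 2 (n / 2) :=
      Nat.digits_def' (by norm_num) (Nat.pos_of_ne_zero hn)
    rcases Nat.even_or_odd n with he | ho
    · have h2 : n % 2 = 0 := Nat.even_iff.mp he
      have hs : s (n / 2) = 1 := by
        have := h
        simp only [s, hd, List.count_cons, h2] at this
        simpa [s] using this
      obtain ⟨j, hj⟩ := ih (n / 2) (Nat.div_lt_self (Nat.pos_of_ne_zero hn) one_lt_two) hs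
      refine ⟨j + 1, ?_⟩
      have := Nat.div_add_mod n 2
      rw [pow_succ]
      omega
    · have h2 : n % 2 = 1 := Nat.odd_iff.mp ho
      have hs : s (n / 2) = 0 := by
        have := h
        simp only [s, hd, List.count_cons, h2] at this
        simpa [s] using this
      have h0 := s_eq_zero hs
      have := Nat.div_add_mod n 2
      exact ⟨0, by omega⟩

lemma div_two_pow {m j : ℕ} (h2 : m % 2 = 1) (hj : m / 2 = 2 ^ j) :
    m = 2 ^ (j + 1) + 1 := by
  have := Nat.div_add_mod m 2
  rw [pow_succ]
  omega

lemma aux_lt (a b : ℕ) (ha : 1 < a) (hb : 1 < b) (k : ℕ) (hk : a * b = 2 ^ k + 1)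
    (hlt : padicValNat 2 (a - 1) < padicValNat 2 (b - 1)) : False := by
  set α := padicValNat 2 (a - 1) with hα
  set β := padicValNat 2 (b - 1) with hβ
  have ha0 : a - 1 ≠ 0 := by omega
  have hb0 : b - 1 ≠ 0 := by omega
  obtain ⟨x, hx⟩ := pow_padicValNat_dvd (p := 2) (n := a - 1)
  obtain ⟨y, hy⟩ := pow_padicValNat_dvd (p := 2) (n := b - 1)
  rw [← hα] at hx; rw [← hβ] at hy
  have hxo : ¬ 2 ∣ x := by
    rintro ⟨x', hx'⟩
    have hdd : 2 ^ (α + 1) ∣ a - 1 := ⟨x', by rw [pow_succ, hx, hx']; ring⟩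
    exact pow_succ_padicValNat_not_dvd (p := 2) ha0 hdd
  have hx0 : x ≠ 0 := by rintro rfl; simp at hx; omega
  have hy0 : y ≠ 0 := by rintro rfl; simp at hy; omega
  have hab : 2 ^ k = (a - 1) * (b - 1) + (a - 1) + (b - 1) := by
    obtain ⟨a', rfl⟩ : ∃ a', a = a' + 2 := ⟨a - 2, by omega⟩
    obtain ⟨b', rfl⟩ : ∃ b', b = b' + 2 := ⟨b - 2, by omega⟩
    have e1 : a' + 2 - 1 = a' + 1 := by omega
    have e2 : b' + 2 - 1 = b' + 1 := by omega
    rw [e1, e2]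
    have h1 : (a' + 2) * (b' + 2) = (a' + 1) * (b' + 1) + (a' + 1) + (b' + 1) + 1 := by
      ring
    omega
  have hb2 : (2 : ℕ) ^ β = 2 ^ α * 2 ^ (β - α) := by
    rw [← pow_add]
    congr 1
    omega
  have key : 2 ^ k = 2 ^ α * (2 ^ β * x * y + x + 2 ^ (β - α) * y) := by
    rw [hab, hx, hy, hb2]
    ring
  set M := 2 ^ β * x * y + x + 2 ^ (β - α) * y with hM
  have hModd : ¬ 2 ∣ M := by
    have h1 : (2 : ℕ) ∣ 2 ^ β := dvd_pow_self 2 (by omega)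
    have h2 : (2 : ℕ) ∣ 2 ^ (β - α) := dvd_pow_self 2 (by omega)
    intro hdvd
    apply hxo
    have hsum : 2 ∣ 2 ^ β * x * y + 2 ^ (β - α) * y :=
      dvd_add (Dvd.dvd.mul_right (Dvd.dvd.mul_right h1 x) y) (Dvd.dvd.mul_right h2 y)
    omega
  have hMdvd : M ∣ 2 ^ k := ⟨2 ^ α, by rw [key]; ring⟩
  obtain ⟨j, hj, hMj⟩ := (Nat.dvd_prime_pow Nat.prime_two).mp hMdvd
  have hj0 : j = 0 := by
    by_contra hj0
    exact hModd (hMj ▸ dvd_pow_self 2 hj0)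
  have hM1 : M = 1 := by rw [hMj, hj0, pow_zero]
  have h2M : 2 ≤ M := by
    have hβ2 : 2 ≤ 2 ^ β := by
      have : 2 ^ 1 ≤ 2 ^ β := Nat.pow_le_pow_right (by norm_num) (by omega)
      simpa using this
    have : 2 ≤ 2 ^ β * x * y :=
      le_trans hβ2 (by nlinarith [Nat.one_le_iff_ne_zero.mpr hx0, Nat.one_le_iff_ne_zero.mpr hy0])
    omega
  omega

theorem lowest_bits_coincide (a b : ℕ) (ha : 1 < a) (hb : 1 < b)
    (hoa : Odd a) (hob : Odd b) (hsab : s (a * b) = 2) :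
    padicValNat 2 (a - 1) = padicValNat 2 (b - 1) := by
  have hab1 : 1 < a * b := by nlinarith
  have hoab : Odd (a * b) := hoa.mul hob
  have h2 : a * b % 2 = 1 := Nat.odd_iff.mp hoab
  have hd : Nat.digits 2 (a * b) = (a * b) % 2 :: Nat.digits 2 ((a * b) / 2) :=
    Nat.digits_def' (by norm_num) (lt_trans zero_lt_one hab1)
  have hs : s ((a * b) / 2) = 1 := by
    have := hsab
    simp only [s, hd, List.count_cons, h2] at this
    simpa [s] using this
  obtain ⟨j, hj⟩ := s_pow2 _ hs
  have hk : a * b = 2 ^ (j + 1) + 1 := div_two_pow h2 hj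
  rcases lt_trichotomy (padicValNat 2 (a - 1)) (padicValNat 2 (b - 1)) with h | h | h
  · exact absurd h (fun h => aux_lt a b ha hb _ hk h)
  · exact h
  · exact absurd h (fun h => aux_lt b a hb ha _ (by rw [mul_comm] at hk; exact hk) h)
end
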